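/- Let M be a compact topological manifold of dimension d ≥ 2, R a homeomorphism of M, (𝓔ₙ⁰)_{n∈ℕ} a sequence of collections of rectangles satisfying hypotheses A₁, A₂, A₃, with 𝓖(𝓔₀⁰) edgeless and 𝓔₀⁰ a single rectangle X₀, K = ⋂ₙ Eₙ⁰, C a Cantor set and K × C tamely embedded in Int X₀. Let (Mₙ)_{n≥1} be homeomorphisms of M satisfying hypotheses B₁, B₂, B₃, B₅ and B₆, and let g = lim gₙ. Then the restriction of g to ⋃_{n∈ℤ} gⁿ(K × C) is isomorphic, as a measurable dynamical system, to the restriction of R × Id_C to ⋃_{n∈ℤ} Rⁿ(K) × C. -/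

import Mathlib

/-!
By B₅ the conjugating map `Ψₙ` puts `K × C` inside the rectangles of `𝓔ₙ⁰`, along which `Mₙ₊₁`
commutes with `Rʲ`, `|j| ≤ n` (B₂). Hence `g_mʲ(x, c)` does not depend on `m ≥ |j|`, and equals
`gʲ(x, c)`. By B₆ this gives `gʲ(x, c) = (Rʲ x, c)` whenever `Rʲ x ∈ K`, while iterability and
compatibility of the collections show that otherwise `gʲ(x, c)` never comes back to `K × C`.
So `gʲ(x, c) = (x', c')` exactly when `Rʲ x = x'` and `c = c'`: both orbit sets are images of
`ℤ × K × C` with the same identifications, and `gⁿ(x, c) ↦ (Rⁿ x, c)` is a conjugacy. It is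
bimeasurable because `gⁿ` and `Rⁿ × id` are closed embeddings on the compact set `K × C`, and the
orbit sets, being invariant, serve as their own full sets.
-/

open Set Function MeasureTheory Topology Filter

noncomputable section

variable {M : Type*}

section Defs
variable [TopologicalSpace M]

/-- A rectangle of `M`: a subset homeomorphic to the closed unit ball of `ℝ^d`. -/
def IsRectangle (d : ℕ) (X : Set M) : Prop :=
  Nonempty (X ≃ₜ (Metric.closedBall (0 : EuclideanSpace ℝ (Fin d)) 1 :
    Set (EuclideanSpace ℝ (Fin d))))

/-- A collection of rectangles: a finite family of pairwise disjoint rectangles. -/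
def IsRectCollection (d : ℕ) (𝓔 : Set (Set M)) : Prop :=
  𝓔.Finite ∧ (∀ X ∈ 𝓔, IsRectangle d X) ∧ 𝓔.Pairwise Disjoint

/-- The union `E` of the rectangles of a collection `𝓔`. -/
def collUnion (𝓔 : Set (Set M)) : Set M := ⋃₀ 𝓔

/-- The collection `𝓔ⁿ = ⋃_{|k| ≤ n} R^k(𝓔)`. -/
def iterColl (R : M ≃ₜ M) (𝓔 : Set (Set M)) (n : ℕ) : Set (Set M) :=
  {Y | ∃ k : ℤ, |k| ≤ (n : ℤ) ∧ ∃ X ∈ 𝓔, Y = (R.toEquiv ^ k) '' X}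

/-- `𝓔` is `p` times iterable. -/
def IterableColl (R : M ≃ₜ M) (𝓔 : Set (Set M)) (p : ℕ) : Prop :=
  ∀ X ∈ 𝓔, ∀ X' ∈ 𝓔, ∀ k l : ℤ, |k| ≤ (p : ℤ) → |l| ≤ (p : ℤ) →
    Disjoint ((R.toEquiv ^ k) '' X) ((R.toEquiv ^ l) '' X') ∨
      (R.toEquiv ^ k) '' X = (R.toEquiv ^ l) '' X'

/-- The oriented graph `𝓖(𝓔)` (vertices the elements of `𝓔`, an edge from `X` to `R(X)`)
has no cycle. -/
def HasNoCycle (R : M ≃ₜ M) (𝓔 : Set (Set M)) : Prop :=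
  ¬ ∃ (X : Set M) (p : ℕ), X ∈ 𝓔 ∧ 1 ≤ p ∧
      (∀ i : ℕ, i ≤ p → (R.toEquiv ^ (i : ℤ)) '' X ∈ 𝓔) ∧ (R.toEquiv ^ (p : ℤ)) '' X = X

/-- The oriented graph `𝓖(𝓔)` has no edge. -/
def EdgelessGraph (R : M ≃ₜ M) (𝓔 : Set (Set M)) : Prop :=
  ∀ X ∈ 𝓔, (R : M → M) '' X ∉ 𝓔

/-- `𝓕` refines `𝓔`. -/
def Refines (𝓕 𝓔 : Set (Set M)) : Prop :=
  (∀ X ∈ 𝓔, ∃ Y ∈ 𝓕, Y ⊆ X) ∧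
    ∀ X ∈ 𝓔, ∀ Y ∈ 𝓕, Disjoint X Y ∨ Y ⊆ interior X

/-- `𝓕` is compatible with `𝓔` for `p` iterates. -/
def CompatibleFor (R : M ≃ₜ M) (𝓕 𝓔 : Set (Set M)) (p : ℕ) : Prop :=
  collUnion 𝓕 ⊆ collUnion 𝓔 ∧
    ∀ k : ℤ, |k| ≤ 2 * (p : ℤ) + 1 →
      (R.toEquiv ^ k) '' collUnion 𝓕 ∩ collUnion 𝓔 ⊆ collUnion 𝓕

/-- Hypothesis A₁. -/
def HypA1 (R : M ≃ₜ M) (𝓔 : ℕ → Set (Set M)) : Prop :=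
  (∀ n, IterableColl R (𝓔 n) (n + 1) ∧ HasNoCycle R (iterColl R (𝓔 n) n)) ∧
  (∀ m n, m < n → Refines (iterColl R (𝓔 n) (n + 1)) (iterColl R (𝓔 m) (m + 1))) ∧
  (∀ n, CompatibleFor R (𝓔 (n + 1)) (𝓔 n) (n + 1))

/-- Hypothesis A₂ (no isolated point). -/
def HypA2 (𝓔 : ℕ → Set (Set M)) : Prop :=
  ∀ n, ∀ X ∈ 𝓔 n, ∃ Y ∈ 𝓔 (n + 1), ∃ Z ∈ 𝓔 (n + 1), Y ≠ Z ∧ Y ⊆ X ∧ Z ⊆ X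

/-- The set `K = ⋂ₙ Eₙ⁰`. -/
def limitK (𝓔 : ℕ → Set (Set M)) : Set M := ⋂ n, collUnion (𝓔 n)

/-- `Ψₙ = Mₙ ∘ ⋯ ∘ M₁`, `Ψ₀ = id`. -/
def Psi (Mseq : ℕ → M ≃ₜ M) : ℕ → M ≃ₜ M
  | 0 => Homeomorph.refl M
  | n + 1 => (Psi Mseq n).trans (Mseq (n + 1))

/-- `gₙ = Ψₙ⁻¹ ∘ R ∘ Ψₙ`. -/
def gSeq (R : M ≃ₜ M) (Mseq : ℕ → M ≃ₜ M) (n : ℕ) : M ≃ₜ M :=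
  ((Psi Mseq n).trans R).trans (Psi Mseq n).symm

/-- The support of a homeomorphism. -/
def homeoSupport (f : M ≃ₜ M) : Set M := closure {x | f x ≠ x}

/-- Hypothesis B₁ (support). -/
def HypB1 (R : M ≃ₜ M) (𝓔 : ℕ → Set (Set M)) (Mseq : ℕ → M ≃ₜ M) : Prop :=
  ∀ n : ℕ, homeoSupport (Mseq (n + 1)) ⊆ collUnion (iterColl R (𝓔 n) n)

/-- Hypothesis B₂ (commutation). -/
def HypB2 (R : M ≃ₜ M) (𝓔 : ℕ → Set (Set M)) (Mseq : ℕ → M ≃ₜ M) : Prop :=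
  ∀ n : ℕ, ∀ X ∈ iterColl R (𝓔 n) n, (R : M → M) '' X ∈ iterColl R (𝓔 n) n →
    ∀ x ∈ X, Mseq (n + 1) (R x) = R (Mseq (n + 1) x)

end Defs

section MetricDefs
variable [MetricSpace M]

/-- Hypothesis A₃ (decay of the collections of rectangles). -/
def HypA3 (R : M ≃ₜ M) (𝓔 : ℕ → Set (Set M)) : Prop :=
  ∀ ε : ℝ, 0 < ε → ∃ N : ℕ, ∀ n ≥ N, ∀ X ∈ iterColl R (𝓔 n) n, Metric.diam X ≤ ε

/-- Hypothesis B₃ (convergence). -/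
def HypB3 (R : M ≃ₜ M) (𝓔 : ℕ → Set (Set M)) (Mseq : ℕ → M ≃ₜ M) : Prop :=
  ∀ ε : ℝ, 0 < ε → ∃ N : ℕ, ∀ n ≥ N,
    ∀ X ∈ iterColl R (𝓔 (n + 1)) (n + 2) \ iterColl R (𝓔 (n + 1)) n,
      Metric.diam ((Psi Mseq n) ⁻¹' X) ≤ ε

/-- Hypothesis B₄ (fibres are thin): the internal radius of `Ψₙ⁻¹(Eₙ⁰)` tends to `0`. -/
def HypB4 (𝓔 : ℕ → Set (Set M)) (Mseq : ℕ → M ≃ₜ M) : Prop :=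
  ∀ ε : ℝ, 0 < ε → ∃ N : ℕ, ∀ n ≥ N, ∀ (x : M) (r : ℝ),
    Metric.ball x r ⊆ (Psi Mseq n) ⁻¹' collUnion (𝓔 n) → r ≤ ε

end MetricDefs

section TopDefs
variable [TopologicalSpace M]

/-- A Cantor set in `M`. -/
def IsCantorSet (K : Set M) : Prop :=
  K.Nonempty ∧ IsCompact K ∧ Perfect K ∧ IsTotallyDisconnected K

/-- A totally disconnected compact set is tamely embedded if it admits arbitrarily small
neighbourhoods that are finite unions of pairwise disjoint rectangles. -/
def TamelyEmbedded (d : ℕ) (Q : Set M) : Prop :=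
  ∀ U : Set M, IsOpen U → Q ⊆ U →
    ∃ 𝓑 : Set (Set M), IsRectCollection d 𝓑 ∧ Q ⊆ interior (collUnion 𝓑) ∧ collUnion 𝓑 ⊆ U

/-- A Cantor set is dynamically coherent for `R`. -/
def DynamicallyCoherent (R : M ≃ₜ M) (K : Set M) : Prop :=
  (∀ k : ℤ, ∃ U : Set M, IsOpen U ∧ (R.toEquiv ^ k) '' K ∩ K = U ∩ K) ∧
  ∀ p : ℕ, ∀ x ∈ K,
    (∃ k : ℕ, 1 ≤ k ∧ ∀ i : ℕ, k ≤ i → i ≤ k + p → (R.toEquiv ^ (i : ℤ)) x ∉ K) ∧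
    (∃ l : ℕ, 1 ≤ l ∧ ∀ i : ℕ, l ≤ i → i ≤ l + p → (R.toEquiv ^ (-(i : ℤ))) x ∉ K)

/-- A Cantor set is dynamically meagre for `R`: it has empty interior in
`Λ = Cl(⋃ᵢ Rⁱ(K))`. -/
def DynamicallyMeagre (R : M ≃ₜ M) (K : Set M) : Prop :=
  ∀ U : Set M, IsOpen U → U ∩ closure (⋃ i : ℤ, (R.toEquiv ^ i) '' K) ⊆ K →
    U ∩ closure (⋃ i : ℤ, (R.toEquiv ^ i) '' K) = ∅

/-- `R` is minimal on the invariant set `Λ` (every orbit of a point of `Λ` is dense in `Λ`). -/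
def MinimalOnSet (R : M ≃ₜ M) (Λ : Set M) : Prop :=
  ∀ x ∈ Λ, Λ ⊆ closure (Set.range fun n : ℤ => (R.toEquiv ^ n) x)

/-- `R` is transitive on the invariant set `Λ` (some orbit is dense in `Λ`). -/
def TransitiveOnSet (R : M ≃ₜ M) (Λ : Set M) : Prop :=
  ∃ x ∈ Λ, Λ ⊆ closure (Set.range fun n : ℤ => (R.toEquiv ^ n) x)

end TopDefs

/-- The support of a measure. -/
def measSupport {M : Type*} [TopologicalSpace M] [MeasurableSpace M] (μ : Measure M) : Set M :=
  {x | ∀ U : Set M, IsOpen U → x ∈ U → 0 < μ U}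

/-- The measurable dynamical system `S` restricted to the `S`-invariant set `A` is isomorphic
to the system `T` restricted to the `T`-invariant set `B`, in the sense of Béguin–Crovisier–Le
Roux: there are full invariant subsets `X₀ ⊆ A`, `Y₀ ⊆ B` and a bijective bimeasurable
conjugacy between them. -/
def MeasIsoOn {X Y : Type*} [MeasurableSpace X] [MeasurableSpace Y]
    (S : X → X) (A : Set X) (T : Y → Y) (B : Set Y) : Prop :=
  ∃ (X₀ : Set X) (Y₀ : Set Y) (Θ : X → Y),
    X₀ ⊆ A ∧ Y₀ ⊆ B ∧ MeasurableSet X₀ ∧ MeasurableSet Y₀ ∧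
    S '' X₀ = X₀ ∧ T '' Y₀ = Y₀ ∧
    (∀ μ : Measure X, IsProbabilityMeasure μ → Measure.map S μ = μ → μ A = 1 → μ X₀ = 1) ∧
    (∀ ν : Measure Y, IsProbabilityMeasure ν → Measure.map T ν = ν → ν B = 1 → ν Y₀ = 1) ∧
    Set.BijOn Θ X₀ Y₀ ∧
    (∀ V : Set Y, MeasurableSet V → MeasurableSet (X₀ ∩ Θ ⁻¹' V)) ∧
    (∀ U : Set X, MeasurableSet U → MeasurableSet (Θ '' (X₀ ∩ U))) ∧
    (∀ x ∈ X₀, Θ (S x) = T (Θ x))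


section B56
variable [TopologicalSpace M] {C : Type*}

/-- Hypothesis B₅ (Cantor sets in the fibres of `Ψ`): for every rectangle `X ∈ 𝓔ₙ⁰`,
the set `Ψₙ⁻¹(Int X)` contains the embedded Cantor set `K_X × C`. -/
def HypB5 (R : M ≃ₜ M) (𝓔 : ℕ → Set (Set M)) (e : ↥(limitK 𝓔) × C → M)
    (Mseq : ℕ → M ≃ₜ M) : Prop :=
  ∀ n : ℕ, ∀ X ∈ 𝓔 n,
    e '' {p : ↥(limitK 𝓔) × C | (p.1 : M) ∈ X} ⊆ (Psi Mseq n) ⁻¹' interior X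

/-- Hypothesis B₆ (embedding a trivial dynamics): if `X → ⋯ → X' = R^p(X)` is a path in the
graph `𝓖(𝓔ₙⁿ)` with `X, X' ∈ 𝓔ₙ⁰`, then `gₙ^p(x, c) = (R^p(x), c)` on `K_X × C`. -/
def HypB6 (R : M ≃ₜ M) (𝓔 : ℕ → Set (Set M)) (e : ↥(limitK 𝓔) × C → M)
    (Mseq : ℕ → M ≃ₜ M) : Prop :=
  ∀ n : ℕ, ∀ X ∈ 𝓔 n, ∀ p : ℕ,
    (∀ i : ℕ, i ≤ p → (R.toEquiv ^ (i : ℤ)) '' X ∈ iterColl R (𝓔 n) n) →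
    (R.toEquiv ^ (p : ℤ)) '' X ∈ 𝓔 n →
    ∀ (x : ↥(limitK 𝓔)) (c : C), (x : M) ∈ X →
      ∀ hx' : (R.toEquiv ^ (p : ℤ)) (x : M) ∈ limitK 𝓔,
        (⇑(gSeq R Mseq n))^[p] (e (x, c)) = e (⟨(R.toEquiv ^ (p : ℤ)) (x : M), hx'⟩, c)

end B56

namespace Equiv.Perm

variable {α : Type*}

theorem zpow_add_one_apply (σ : Perm α) (n : ℤ) (x : α) : (σ ^ (n + 1)) x = σ ((σ ^ n) x) := by
  rw [add_comm, zpow_one_add, mul_apply]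

theorem zpow_apply_eq_zpow_apply_iff (σ : Perm α) (m n : ℤ) (x y : α) :
    (σ ^ m) x = (σ ^ n) y ↔ (σ ^ (m - n)) x = y := by
  rw [← inv_eq_iff_eq, ← mul_apply, ← zpow_neg, ← zpow_add, neg_add_eq_sub]

theorem apply_zpow_apply_eq_zpow_apply_apply {f : α → α} {σ : Perm α} {x : α} {n : ℤ}
    (h : ∀ k, -n ≤ k → k < n → f (σ ((σ ^ k) x)) = σ (f ((σ ^ k) x))) {j : ℤ} (hj : |j| ≤ n) :
    f ((σ ^ j) x) = (σ ^ j) (f x) := by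
  obtain ⟨hnj, hjn⟩ := abs_le.1 hj
  clear hj
  rcases le_total 0 j with h0 | h0
  · induction j, h0 using Int.leInduction with
    | base => simp
    | succ k hk ih =>
      rw [zpow_add_one_apply, zpow_add_one_apply, h k (by omega) (by omega),
        ih (by omega) (by omega)]
  · induction j, h0 using Int.leInductionDown with
    | base => simp
    | pred k hk ih =>
      apply σ.injective
      rw [← zpow_add_one_apply, sub_add_cancel, ← h (k - 1) (by omega) (by omega),
        ← zpow_add_one_apply, sub_add_cancel, ih (by omega) (by omega)]

theorem coe_prodCongr_refl_zpow {β : Type*} (σ : Perm α) (n : ℤ) :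
    ⇑(σ.prodCongr (Equiv.refl β) ^ n) = Prod.map ⇑(σ ^ n) id :=
  congrArg DFunLike.coe (map_zpow ({ toFun := (·.prodCongr (Equiv.refl β))
                                     map_one' := rfl
                                     map_mul' := fun _ _ => rfl } : Perm α →* Perm (α × β))
    σ n).symm

end Equiv.Perm

theorem Homeomorph.toEquiv_zpow {α : Type*} [TopologicalSpace α] (f : α ≃ₜ α) (n : ℤ) :
    (f ^ n).toEquiv = f.toEquiv ^ n :=
  map_zpow ({ toFun := Homeomorph.toEquiv, map_one' := rfl, map_mul' := fun _ _ => rfl } :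
    (α ≃ₜ α) →* Equiv.Perm α) f n

theorem Homeomorph.continuous_toEquiv_zpow {α : Type*} [TopologicalSpace α] (f : α ≃ₜ α)
    (n : ℤ) : Continuous ⇑(f.toEquiv ^ n) := by
  rw [← toEquiv_zpow, coe_toEquiv]
  exact (f ^ n).continuous

section UniformLimit

variable {α ι : Type*} [UniformSpace α] {l : Filter ι}

theorem TendstoUniformly.tendsto_iterate {F : ι → α → α} {f : α → α}
    (hF : TendstoUniformly F f l) (hf : Continuous f) (i : ℕ) (x : α) :
    Tendsto (fun n => (F n)^[i] x) l (𝓝 (f^[i] x)) := by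
  induction i with
  | zero => exact tendsto_const_nhds
  | succ i ih =>
    simp only [iterate_succ_apply']
    exact hF.tendsto_comp hf.continuousAt ih

theorem Homeomorph.zpow_apply_eq_of_tendstoUniformly [T2Space α] [l.NeBot] {F : ι → α ≃ₜ α}
    {g : α ≃ₜ α} (hF : TendstoUniformly (fun n => ⇑(F n)) ⇑g l) {j : ℤ} {x y : α}
    (h : ∀ᶠ n in l, ((F n).toEquiv ^ j) x = y) : (g.toEquiv ^ j) x = y := by
  have iterate_eq : ∀ (i : ℕ) (x y : α), (∀ᶠ n in l, (⇑(F n))^[i] x = y) → (⇑g)^[i] x = y :=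
    fun i x y h => tendsto_nhds_unique (hF.tendsto_iterate g.continuous i x)
      (tendsto_const_nhds.congr' (h.mono fun _ => Eq.symm))
  obtain ⟨i, rfl | rfl⟩ := j.eq_nat_or_neg
  · simp only [zpow_natCast, Equiv.Perm.coe_pow, coe_toEquiv] at h ⊢
    exact iterate_eq i x y h
  -- uniform convergence only controls forward iterates, so for `j < 0` start from `y`
  · simp only [zpow_neg, zpow_natCast, Equiv.Perm.inv_eq_iff_eq, Equiv.Perm.coe_pow,
      coe_toEquiv] at h ⊢
    exact (iterate_eq i y x (h.mono fun _ => Eq.symm)).symm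

end UniformLimit

section OrbitIsomorphism

variable {X Y Q : Type*} {φ : ℤ → Q → X} {ψ : ℤ → Q → Y}

theorem image_iUnion_range_of_shift {S : X → X} (hS : ∀ n q, S (φ n q) = φ (n + 1) q) :
    S '' ⋃ n, range (φ n) = ⋃ n, range (φ n) := by
  ext x
  simp only [mem_image, mem_iUnion, mem_range]
  constructor
  · rintro ⟨_, ⟨n, q, rfl⟩, rfl⟩
    exact ⟨n + 1, q, (hS n q).symm⟩
  · rintro ⟨n, q, rfl⟩
    exact ⟨_, ⟨n - 1, q, rfl⟩, by rw [hS, sub_add_cancel]⟩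

theorem iUnion_range_inter_preimage {Θ : X → Y} (hΘ : ∀ n q, Θ (φ n q) = ψ n q) (V : Set Y) :
    (⋃ n, range (φ n)) ∩ Θ ⁻¹' V = ⋃ n, φ n '' (ψ n ⁻¹' V) := by
  ext x
  simp only [mem_inter_iff, mem_iUnion, mem_range, mem_image, mem_preimage]
  constructor
  · rintro ⟨⟨n, q, rfl⟩, hV⟩
    exact ⟨n, q, by rwa [← hΘ], rfl⟩
  · rintro ⟨n, q, hq, rfl⟩
    exact ⟨⟨n, q, rfl⟩, by rwa [hΘ]⟩

theorem image_iUnion_range_inter {Θ : X → Y} (hΘ : ∀ n q, Θ (φ n q) = ψ n q) (U : Set X) :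
    Θ '' ((⋃ n, range (φ n)) ∩ U) = ⋃ n, ψ n '' (φ n ⁻¹' U) := by
  ext y
  simp only [mem_inter_iff, mem_iUnion, mem_range, mem_image, mem_preimage]
  constructor
  · rintro ⟨_, ⟨⟨n, q, rfl⟩, hU⟩, rfl⟩
    exact ⟨n, q, hU, (hΘ n q).symm⟩
  · rintro ⟨n, q, hq, rfl⟩
    exact ⟨φ n q, ⟨⟨n, q, rfl⟩, hq⟩, hΘ n q⟩

variable [MeasurableSpace X] [MeasurableSpace Y] [MeasurableSpace Q]

theorem measIsoOn_iUnion_range [Nonempty (X → Y)] {S : X → X} {T : Y → Y}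
    (hφ : ∀ n, MeasurableEmbedding (φ n)) (hψ : ∀ n, MeasurableEmbedding (ψ n))
    (hφψ : ∀ n n' q q', φ n q = φ n' q' ↔ ψ n q = ψ n' q')
    (hS : ∀ n q, S (φ n q) = φ (n + 1) q) (hT : ∀ n q, T (ψ n q) = ψ (n + 1) q) :
    MeasIsoOn S (⋃ n, range (φ n)) T (⋃ n, range (ψ n)) := by
  set Θ : X → Y := extend (fun z : ℤ × Q => φ z.1 z.2) (fun z => ψ z.1 z.2)
    (Classical.arbitrary (X → Y))
  have hΘ : ∀ n q, Θ (φ n q) = ψ n q := fun n q =>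
    FactorsThrough.extend_apply (fun _ _ h => (hφψ _ _ _ _).1 h) _ (n, q)
  refine ⟨_, _, Θ, subset_rfl, subset_rfl, .iUnion fun n => (hφ n).measurableSet_range,
    .iUnion fun n => (hψ n).measurableSet_range, image_iUnion_range_of_shift hS,
    image_iUnion_range_of_shift hT, fun _ _ _ h => h, fun _ _ _ h => h, ⟨?_, ?_, ?_⟩,
    fun V hV => ?_, fun U hU => ?_, ?_⟩
  · intro x hx
    obtain ⟨n, q, rfl⟩ := mem_iUnion.1 hx
    exact hΘ n q ▸ mem_iUnion.2 ⟨n, q, rfl⟩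
  · intro x hx x' hx' h
    obtain ⟨n, q, rfl⟩ := mem_iUnion.1 hx
    obtain ⟨n', q', rfl⟩ := mem_iUnion.1 hx'
    exact (hφψ n n' q q').2 (by rwa [hΘ, hΘ] at h)
  · intro y hy
    obtain ⟨n, q, rfl⟩ := mem_iUnion.1 hy
    exact ⟨φ n q, mem_iUnion.2 ⟨n, q, rfl⟩, hΘ n q⟩
  · rw [iUnion_range_inter_preimage hΘ]
    exact .iUnion fun n => (hφ n).measurableSet_image.2 ((hψ n).measurable hV)
  · rw [image_iUnion_range_inter hΘ]
    exact .iUnion fun n => (hψ n).measurableSet_image.2 ((hφ n).measurable hU)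
  · intro x hx
    obtain ⟨n, q, rfl⟩ := mem_iUnion.1 hx
    rw [hS, hΘ, hΘ, hT]

variable [TopologicalSpace X] [T2Space X] [BorelSpace X] [TopologicalSpace Y] [T2Space Y]
  [BorelSpace Y] [TopologicalSpace Q] [CompactSpace Q] [BorelSpace Q]

theorem Homeomorph.measurableEmbedding_zpow_comp (S : X ≃ₜ X) {a : Q → X} (ha : Continuous a)
    (ha' : Injective a) (n : ℤ) : MeasurableEmbedding (⇑(S.toEquiv ^ n) ∘ a) :=
  ((S.continuous_toEquiv_zpow n).comp ha).isClosedEmbedding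
    ((S.toEquiv ^ n).injective.comp ha') |>.measurableEmbedding

theorem measIsoOn_iUnion_zpow_image_range [Nonempty (X → Y)] (S : X ≃ₜ X) (T : Y ≃ₜ Y) {a : Q → X}
    {b : Q → Y} (ha : Continuous a) (ha' : Injective a) (hb : Continuous b) (hb' : Injective b)
    (hab : ∀ (n : ℤ) (q q' : Q), (S.toEquiv ^ n) (a q) = a q' ↔ (T.toEquiv ^ n) (b q) = b q') :
    MeasIsoOn ⇑S (⋃ n : ℤ, (S.toEquiv ^ n) '' range a)
      ⇑T (⋃ n : ℤ, (T.toEquiv ^ n) '' range b) := by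
  simp only [← range_comp]
  refine measIsoOn_iUnion_range (S.measurableEmbedding_zpow_comp ha ha')
    (T.measurableEmbedding_zpow_comp hb hb') (fun n n' q q' => ?_)
    (fun n q => (Equiv.Perm.zpow_add_one_apply _ n _).symm)
    (fun n q => (Equiv.Perm.zpow_add_one_apply _ n _).symm)
  simp only [comp_apply, Equiv.Perm.zpow_apply_eq_zpow_apply_iff]
  exact hab _ q q'

end OrbitIsomorphism

theorem exists_mem_of_mem_limitK {𝓔 : ℕ → Set (Set M)} {x : M} (hx : x ∈ limitK 𝓔) (n : ℕ) :
    ∃ X ∈ 𝓔 n, x ∈ X :=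
  mem_sUnion.1 (mem_iInter.1 hx n)

section Rectangles

variable [TopologicalSpace M] {d : ℕ}

theorem IsRectangle.isCompact {X : Set M} (h : IsRectangle d X) : IsCompact X := by
  obtain ⟨f⟩ := h
  have : CompactSpace (Metric.closedBall (0 : EuclideanSpace ℝ (Fin d)) 1) :=
    isCompact_iff_compactSpace.1 (isCompact_closedBall _ _)
  simpa [range_comp, f.symm.range_coe] using
    isCompact_range (continuous_subtype_val.comp f.symm.continuous)

theorem IsRectCollection.isClosed_collUnion [T2Space M] {𝓔 : Set (Set M)}
    (h : IsRectCollection d 𝓔) : IsClosed (collUnion 𝓔) := by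
  rw [collUnion, sUnion_eq_biUnion]
  exact h.1.isClosed_biUnion fun X hX => (h.2.1 X hX).isCompact.isClosed

theorem isClosed_limitK [T2Space M] {𝓔 : ℕ → Set (Set M)} (h : ∀ n, IsRectCollection d (𝓔 n)) :
    IsClosed (limitK 𝓔) :=
  isClosed_iInter fun n => (h n).isClosed_collUnion

end Rectangles

section Collections

variable [TopologicalSpace M] {R : M ≃ₜ M} {𝓔 : ℕ → Set (Set M)}

theorem collUnion_anti (hcomp : ∀ n, CompatibleFor R (𝓔 (n + 1)) (𝓔 n) (n + 1)) {m n : ℕ}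
    (hmn : m ≤ n) : collUnion (𝓔 n) ⊆ collUnion (𝓔 m) :=
  antitone_nat_of_succ_le (f := fun n => collUnion (𝓔 n)) (fun n => (hcomp n).1) hmn

theorem IterableColl.zpow_image_eq {𝓕 : Set (Set M)} {p : ℕ} (h : IterableColl R 𝓕 p)
    {X X' : Set M} (hX : X ∈ 𝓕) (hX' : X' ∈ 𝓕) {j : ℤ} (hj : |j| ≤ p) {x : M} (hx : x ∈ X)
    (hx' : (R.toEquiv ^ j) x ∈ X') : (R.toEquiv ^ j) '' X = X' := by
  rcases h X hX X' hX' j 0 hj (by simp) with hdisj | heq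
  · exact absurd (by simpa using hx') (disjoint_left.1 hdisj (mem_image_of_mem _ hx))
  · simpa using heq

theorem gSeq_zpow_apply (Mseq : ℕ → M ≃ₜ M) (n : ℕ) (j : ℤ) (y : M) :
    ((gSeq R Mseq n).toEquiv ^ j) y = (Psi Mseq n).symm ((R.toEquiv ^ j) (Psi Mseq n y)) := by
  have hconj : (gSeq R Mseq n).toEquiv
      = (Psi Mseq n).toEquiv⁻¹ * R.toEquiv * ((Psi Mseq n).toEquiv⁻¹)⁻¹ := by
    ext x
    simp [gSeq, Equiv.Perm.mul_apply, Equiv.Perm.inv_def]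
  rw [hconj, conj_zpow]
  simp [Equiv.Perm.mul_apply, Equiv.Perm.inv_def]

theorem HypB2.apply_zpow_apply {Mseq : ℕ → M ≃ₜ M} (hB2 : HypB2 R 𝓔 Mseq) {m : ℕ} {X : Set M}
    (hX : X ∈ 𝓔 m) {w : M} (hw : w ∈ X) {j : ℤ} (hj : |j| ≤ m) :
    Mseq (m + 1) ((R.toEquiv ^ j) w) = (R.toEquiv ^ j) (Mseq (m + 1) w) := by
  refine Equiv.Perm.apply_zpow_apply_eq_zpow_apply_apply (fun k hk hk' => ?_) hj
  refine hB2 m _ ⟨k, abs_le.2 ⟨hk, hk'.le⟩, X, hX, rfl⟩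
    ⟨k + 1, abs_le.2 ⟨by omega, by omega⟩, X, hX, ?_⟩ _ (mem_image_of_mem _ hw)
  rw [image_image]
  exact image_congr fun x _ => (Equiv.Perm.zpow_add_one_apply _ k x).symm

theorem gSeq_succ_zpow_apply {Mseq : ℕ → M ≃ₜ M} (hB2 : HypB2 R 𝓔 Mseq) {m : ℕ} {X : Set M}
    (hX : X ∈ 𝓔 m) {y : M} (hy : Psi Mseq m y ∈ X) {j : ℤ} (hj : |j| ≤ m) :
    ((gSeq R Mseq (m + 1)).toEquiv ^ j) y = ((gSeq R Mseq m).toEquiv ^ j) y := by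
  rw [gSeq_zpow_apply, gSeq_zpow_apply]
  change (Psi Mseq m).symm ((Mseq (m + 1)).symm ((R.toEquiv ^ j) (Mseq (m + 1) (Psi Mseq m y))))
    = _
  rw [← hB2.apply_zpow_apply hX hy hj, Homeomorph.symm_apply_apply]

theorem HypB5.psi_mem {C : Type*} {e : ↥(limitK 𝓔) × C → M} {Mseq : ℕ → M ≃ₜ M}
    (hB5 : HypB5 R 𝓔 e Mseq) {n : ℕ} {X : Set M}
    (hX : X ∈ 𝓔 n) {q : ↥(limitK 𝓔) × C} (hq : (q.1 : M) ∈ X) : Psi Mseq n (e q) ∈ X :=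
  interior_subset (hB5 n X hX (mem_image_of_mem e hq))

end Collections

section Conjugacy

variable [UniformSpace M] [T2Space M] {C : Type*} {R : M ≃ₜ M} {𝓔 : ℕ → Set (Set M)}
  {e : ↥(limitK 𝓔) × C → M} {Mseq : ℕ → M ≃ₜ M} {g : M ≃ₜ M}

theorem zpow_apply_eq_gSeq_zpow_apply (hB2 : HypB2 R 𝓔 Mseq) (hB5 : HypB5 R 𝓔 e Mseq)
    (hg : TendstoUniformly (fun n => ⇑(gSeq R Mseq n)) ⇑g atTop) (q : ↥(limitK 𝓔) × C)
    {j : ℤ} {n : ℕ} (hjn : |j| ≤ n) :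
    (g.toEquiv ^ j) (e q) = ((gSeq R Mseq n).toEquiv ^ j) (e q) := by
  refine Homeomorph.zpow_apply_eq_of_tendstoUniformly hg ?_
  filter_upwards [eventually_ge_atTop n] with m hm
  induction m, hm using Nat.le_induction with
  | base => rfl
  | succ m hm ih =>
    obtain ⟨X, hX, hqX⟩ := exists_mem_of_mem_limitK q.1.2 m
    rw [gSeq_succ_zpow_apply hB2 hX (hB5.psi_mem hX hqX) (hjn.trans (by exact_mod_cast hm)), ih]

theorem zpow_natCast_apply_eq_of_mem_limitK (hIter : ∀ n, IterableColl R (𝓔 n) (n + 1))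
    (hB2 : HypB2 R 𝓔 Mseq) (hB5 : HypB5 R 𝓔 e Mseq) (hB6 : HypB6 R 𝓔 e Mseq)
    (hg : TendstoUniformly (fun n => ⇑(gSeq R Mseq n)) ⇑g atTop) {x y : ↥(limitK 𝓔)} {i : ℕ}
    (hxy : (R.toEquiv ^ (i : ℤ)) x = y) (c : C) :
    (g.toEquiv ^ (i : ℤ)) (e (x, c)) = e (y, c) := by
  have hi : |(i : ℤ)| ≤ i := (abs_of_nonneg (Int.natCast_nonneg i)).le
  obtain ⟨X, hX, hxX⟩ := exists_mem_of_mem_limitK x.2 i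
  obtain ⟨X', hX', hyX'⟩ := exists_mem_of_mem_limitK y.2 i
  have hXX' := (hIter i).zpow_image_eq hX hX' (hi.trans (by omega)) hxX (hxy ▸ hyX')
  have path : ∀ t ≤ i, (R.toEquiv ^ (t : ℤ)) '' X ∈ iterColl R (𝓔 i) i := fun t ht =>
    ⟨t, (abs_of_nonneg (Int.natCast_nonneg t)).trans_le (by exact_mod_cast ht), X, hX, rfl⟩
  rw [show y = ⟨_, hxy ▸ y.2⟩ from Subtype.ext hxy.symm,
    zpow_apply_eq_gSeq_zpow_apply hB2 hB5 hg _ hi, zpow_natCast, Equiv.Perm.coe_pow,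
    Homeomorph.coe_toEquiv]
  exact hB6 i X hX i path (hXX' ▸ hX') x c hxX _

theorem zpow_apply_eq_of_mem_limitK (hIter : ∀ n, IterableColl R (𝓔 n) (n + 1))
    (hB2 : HypB2 R 𝓔 Mseq) (hB5 : HypB5 R 𝓔 e Mseq) (hB6 : HypB6 R 𝓔 e Mseq)
    (hg : TendstoUniformly (fun n => ⇑(gSeq R Mseq n)) ⇑g atTop) {x y : ↥(limitK 𝓔)} {j : ℤ}
    (hxy : (R.toEquiv ^ j) x = y) (c : C) : (g.toEquiv ^ j) (e (x, c)) = e (y, c) := by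
  obtain ⟨i, rfl | rfl⟩ := j.eq_nat_or_neg
  · exact zpow_natCast_apply_eq_of_mem_limitK hIter hB2 hB5 hB6 hg hxy c
  · rw [zpow_neg, Equiv.Perm.inv_eq_iff_eq] at hxy ⊢
    exact (zpow_natCast_apply_eq_of_mem_limitK hIter hB2 hB5 hB6 hg hxy.symm c).symm

theorem zpow_apply_mem_limitK_of_eq (hIter : ∀ n, IterableColl R (𝓔 n) (n + 1))
    (hcomp : ∀ n, CompatibleFor R (𝓔 (n + 1)) (𝓔 n) (n + 1))
    (hB2 : HypB2 R 𝓔 Mseq) (hB5 : HypB5 R 𝓔 e Mseq)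
    (hg : TendstoUniformly (fun n => ⇑(gSeq R Mseq n)) ⇑g atTop) {q q' : ↥(limitK 𝓔) × C}
    {j : ℤ} (h : (g.toEquiv ^ j) (e q) = e q') : (R.toEquiv ^ j) q.1 ∈ limitK 𝓔 := by
  refine mem_iInter.2 fun m => ?_
  set n := max j.natAbs m
  have hjn : |j| ≤ n := by rw [Int.abs_eq_natAbs]; exact_mod_cast le_max_left _ _
  obtain ⟨X, hX, hqX⟩ := exists_mem_of_mem_limitK q.1.2 n
  obtain ⟨X', hX', hqX'⟩ := exists_mem_of_mem_limitK q'.1.2 n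
  have hΨ : (R.toEquiv ^ j) (Psi Mseq n (e q)) = Psi Mseq n (e q') := by
    rw [← h, zpow_apply_eq_gSeq_zpow_apply hB2 hB5 hg q hjn, gSeq_zpow_apply,
      Homeomorph.apply_symm_apply]
  have hXX' := (hIter n).zpow_image_eq hX hX' (hjn.trans (by omega)) (hB5.psi_mem hX hqX)
    (hΨ ▸ hB5.psi_mem hX' hqX')
  exact collUnion_anti hcomp (le_max_right _ _) ⟨X', hX', hXX' ▸ mem_image_of_mem _ hqX⟩

theorem zpow_apply_eq_apply_iff (hIter : ∀ n, IterableColl R (𝓔 n) (n + 1))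
    (hcomp : ∀ n, CompatibleFor R (𝓔 (n + 1)) (𝓔 n) (n + 1))
    (hB2 : HypB2 R 𝓔 Mseq) (hB5 : HypB5 R 𝓔 e Mseq) (hB6 : HypB6 R 𝓔 e Mseq)
    (hg : TendstoUniformly (fun n => ⇑(gSeq R Mseq n)) ⇑g atTop) (he : Injective e)
    (j : ℤ) (q q' : ↥(limitK 𝓔) × C) :
    (g.toEquiv ^ j) (e q) = e q' ↔ (R.toEquiv ^ j) q.1 = q'.1 ∧ q.2 = q'.2 := by
  constructor
  · intro h
    have hK := zpow_apply_mem_limitK_of_eq hIter hcomp hB2 hB5 hg h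
    have := zpow_apply_eq_of_mem_limitK hIter hB2 hB5 hB6 hg (y := ⟨_, hK⟩) rfl q.2
    obtain rfl := he (this.symm.trans h)
    exact ⟨rfl, rfl⟩
  · rintro ⟨h1, h2⟩
    rw [zpow_apply_eq_of_mem_limitK hIter hB2 hB5 hB6 hg (y := q'.1) h1 q.2, h2]

end Conjugacy

theorem g_isomorphic_trivial_product_general (d : ℕ) (M : Type*) [MetricSpace M]
    [CompactSpace M]
    [MeasurableSpace M] [BorelSpace M]
    (R : M ≃ₜ M) (𝓔 : ℕ → Set (Set M)) (hrect : ∀ n, IsRectCollection d (𝓔 n))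
    (hA1 : HypA1 R 𝓔)
    (C : Type*) [TopologicalSpace C] [CompactSpace C] [TopologicalSpace.MetrizableSpace C]
    [Nonempty C]
    [MeasurableSpace C] [BorelSpace C]
    (e : ↥(limitK 𝓔) × C → M) (he : Continuous e) (heInj : Function.Injective e)
    (Mseq : ℕ → M ≃ₜ M)
    (hB2 : HypB2 R 𝓔 Mseq)
    (hB5 : HypB5 R 𝓔 e Mseq) (hB6 : HypB6 R 𝓔 e Mseq)
    (g : M ≃ₜ M)
    (hg : TendstoUniformly (fun n => ⇑(gSeq R Mseq n)) (⇑g) Filter.atTop) :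
    MeasIsoOn (⇑g) (⋃ n : ℤ, (g.toEquiv ^ n) '' Set.range e)
      (fun p : M × C => (R p.1, p.2))
      ((⋃ n : ℤ, (R.toEquiv ^ n) '' limitK 𝓔) ×ˢ (Set.univ : Set C)) := by
  have : CompactSpace ↥(limitK 𝓔) :=
    isCompact_iff_compactSpace.1 (isClosed_limitK hrect).isCompact
  have : Nonempty (M → M × C) := ⟨fun x => (x, Classical.arbitrary C)⟩
  let T : (M × C) ≃ₜ (M × C) := R.prodCongr (Homeomorph.refl C)
  have hT (n : ℤ) : ⇑(T.toEquiv ^ n) = Prod.map ⇑(R.toEquiv ^ n) id :=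
    Equiv.Perm.coe_prodCongr_refl_zpow R.toEquiv n
  have hB : ⋃ n : ℤ, (T.toEquiv ^ n) '' range (Prod.map ((↑) : limitK 𝓔 → M) (id : C → C))
      = (⋃ n : ℤ, (R.toEquiv ^ n) '' limitK 𝓔) ×ˢ (univ : Set C) := by
    simp only [hT, range_prodMap, Subtype.range_coe, range_id, prodMap_image_prod, image_id,
      iUnion_prod_const]
  rw [← hB]
  refine measIsoOn_iUnion_zpow_image_range g T he heInj
    (continuous_subtype_val.prodMap continuous_id) (Subtype.val_injective.prodMap injective_id)
    fun n q q' => ?_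
  rw [zpow_apply_eq_apply_iff (fun n => (hA1.1 n).1) hA1.2.2 hB2 hB5 hB6 hg heInj, hT,
    Prod.ext_iff]
  rfl

/-- Under hypotheses `A₁`, `A₂`, `A₃`, `B₁`, `B₂`, `B₃`, `B₅`, `B₆`, the
restriction of `g = lim gₙ` to `⋃ₙ gⁿ(K × C)` is isomorphic, as a measurable dynamical
system, to the restriction of `R × Id` to `⋃ₙ Rⁿ(K) × C`. -/
theorem g_isomorphic_trivial_product (d : ℕ) (hd : 2 ≤ d) (M : Type*) [MetricSpace M]
    [CompactSpace M] [ChartedSpace (EuclideanSpace ℝ (Fin d)) M]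
    [MeasurableSpace M] [BorelSpace M]
    (R : M ≃ₜ M) (𝓔 : ℕ → Set (Set M)) (hrect : ∀ n, IsRectCollection d (𝓔 n))
    (hA1 : HypA1 R 𝓔) (hA2 : HypA2 𝓔) (hA3 : HypA3 R 𝓔)
    (hEdge : EdgelessGraph R (𝓔 0)) (X₀ : Set M) (h𝓔0 : 𝓔 0 = {X₀})
    (C : Type*) [TopologicalSpace C] [CompactSpace C] [TopologicalSpace.MetrizableSpace C]
    [TotallyDisconnectedSpace C] [Nonempty C] (hCperf : Perfect (Set.univ : Set C))
    [MeasurableSpace C] [BorelSpace C]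
    (e : ↥(limitK 𝓔) × C → M) (he : Continuous e) (heInj : Function.Injective e)
    (heRange : Set.range e ⊆ interior X₀) (heTame : TamelyEmbedded d (Set.range e))
    (Mseq : ℕ → M ≃ₜ M)
    (hB1 : HypB1 R 𝓔 Mseq) (hB2 : HypB2 R 𝓔 Mseq) (hB3 : HypB3 R 𝓔 Mseq)
    (hB5 : HypB5 R 𝓔 e Mseq) (hB6 : HypB6 R 𝓔 e Mseq)
    (g : M ≃ₜ M)
    (hg : TendstoUniformly (fun n => ⇑(gSeq R Mseq n)) (⇑g) Filter.atTop) :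
    MeasIsoOn (⇑g) (⋃ n : ℤ, (g.toEquiv ^ n) '' Set.range e)
      (fun p : M × C => (R p.1, p.2))
      ((⋃ n : ℤ, (R.toEquiv ^ n) '' limitK 𝓔) ×ˢ (Set.univ : Set C)) :=
  g_isomorphic_trivial_product_general d M R 𝓔 hrect hA1 C e he heInj Mseq hB2 hB5 hB6 g hg

end
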